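/- Let M be a cancellative monoid and N a nonempty subsemigroup of M that is a two-sided ideal of M (i.e., mn ∈ N and nm ∈ N for all m ∈ M, n ∈ N). Let R be a ring that is N-central Armendariz: whenever α, β in the (non-unital) semigroup algebra R[N] satisfy αβ = 0, then (α g)·(β h) lies in the center of R for every g in the support of α and every h in the support of β. Then R is M-central Armendariz. -/

import Mathlib

/-!
Fix `n ∈ N`. By cancellativity, `g ↦ n g` and `h ↦ h n` embed `M` into `N`, and
`(n g)(h n) = n (g h) n`. Pushing `α` forward along the first embedding and `β` along the
second therefore turns `α β = 0` into a vanishing product in `R[N]` with the same coefficients.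
-/

open Function

namespace MonoidAlgebra

variable {R G H : Type*} [Semiring R]

theorem mapDomain_mul_mapDomain [Mul G] [Mul H] {φ ψ χ : G → H}
    (hχ : ∀ a b, φ a * ψ b = χ (a * b)) (x y : MonoidAlgebra R G) :
    mapDomain φ x * mapDomain ψ y = mapDomain χ (x * y) := by
  simp [mul_def, mapDomain_sum, add_mul, mul_add, Finsupp.sum_mapDomain_index, hχ]

theorem coeff_mapDomain_apply_of_injective {φ : G → H}
    (hφ : Injective φ) (x : MonoidAlgebra R G) (a : G) :
    (mapDomain φ x).coeff (φ a) = x.coeff a :=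
  Finsupp.mapDomain_apply hφ x.coeff a

theorem apply_mem_support_mapDomain_iff {φ : G → H}
    (hφ : Injective φ) {x : MonoidAlgebra R G} {a : G} :
    φ a ∈ (mapDomain φ x).coeff.support ↔ a ∈ x.coeff.support := by
  simp only [Finsupp.mem_support_iff, coeff_mapDomain_apply_of_injective hφ]

end MonoidAlgebra

open MonoidAlgebra

def IsCentralArmendariz (R G : Type*) [Semiring R] [Mul G] : Prop :=
  ∀ α β : MonoidAlgebra R G, α * β = 0 →
    ∀ g ∈ α.coeff.support, ∀ h ∈ β.coeff.support, α.coeff g * β.coeff h ∈ Set.center R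

theorem IsCentralArmendariz.of_injective_mul {R G H : Type*} [Semiring R] [Mul G] [Mul H]
    {φ ψ χ : G → H} (hφ : Injective φ) (hψ : Injective ψ) (hχ : ∀ a b, φ a * ψ b = χ (a * b))
    (hH : IsCentralArmendariz R H) : IsCentralArmendariz R G := by
  intro α β hαβ g hg h hh
  have hprod : mapDomain (R := R) φ α * mapDomain ψ β = 0 := by
    rw [mapDomain_mul_mapDomain hχ, hαβ, mapDomain_zero]
  simpa only [coeff_mapDomain_apply_of_injective hφ, coeff_mapDomain_apply_of_injective hψ] using
    hH _ _ hprod (φ g) ((apply_mem_support_mapDomain_iff hφ).mpr hg)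
      (ψ h) ((apply_mem_support_mapDomain_iff hψ).mpr hh)

/-- Let `M` be a cancellative monoid and `N` a nonempty subsemigroup of `M` which is a
two-sided ideal of `M`. If `R` is `N`-central Armendariz, then `R` is `M`-central Armendariz. -/
theorem stmt_11 (M R : Type*) [Monoid M] [Ring R]
    (hcancel₁ : ∀ m g h : M, m * g = m * h → g = h)
    (hcancel₂ : ∀ m g h : M, g * m = h * m → g = h)
    (N : Subsemigroup M) (hN : (N : Set M).Nonempty)
    (hideal : ∀ m : M, ∀ n ∈ N, m * n ∈ N ∧ n * m ∈ N)
    (hNA : ∀ α β : MonoidAlgebra R N, α * β = 0 →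
      ∀ g ∈ α.coeff.support, ∀ h ∈ β.coeff.support, α.coeff g * β.coeff h ∈ Set.center R) :
    ∀ α β : MonoidAlgebra R M, α * β = 0 →
      ∀ g ∈ α.coeff.support, ∀ h ∈ β.coeff.support, α.coeff g * β.coeff h ∈ Set.center R := by
  obtain ⟨n, hn⟩ := hN
  let φ : M → N := fun g => ⟨n * g, (hideal g n hn).2⟩
  let ψ : M → N := fun h => ⟨h * n, (hideal h n hn).1⟩
  let χ : M → N := fun t => ⟨n * t * n, N.mul_mem (hideal t n hn).2 hn⟩
  have hφ : Injective φ := fun a b hab => hcancel₁ n a b (congrArg Subtype.val hab)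
  have hψ : Injective ψ := fun a b hab => hcancel₂ n a b (congrArg Subtype.val hab)
  have hχ : ∀ a b, φ a * ψ b = χ (a * b) := fun a b => Subtype.ext (by simp [φ, ψ, χ, mul_assoc])
  exact IsCentralArmendariz.of_injective_mul hφ hψ hχ hNA
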